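/- Let μ = ζ^n be an n-fold product distribution over columns and Π a protocol on input (X₁,...,X_T) where the j-th coordinates of all players' inputs form the j-th column, with columns drawn independently from ζ. Then I(X₁,...,X_T; Π(X₁,...,X_T)) ≥ Σ_{i=1}^n I(X_{1,i},...,X_{T,i}; Π(X₁,...,X_T)). -/

import Mathlib

/-!
Write `Y` for the matrix of columns and `Π` for the transcript, so that
`I(Y; Π) = H(Y) - H(Y | Π)` and likewise for each column `Y i`. Independence of the columns
gives `H(Y) = ∑ H(Y i)`: the logarithm of the product law is the sum of the logarithms of the
column laws. Conditional entropy is subadditive, `H(Y | Π) ≤ ∑ H(Y i | Π)`, by Gibbs' inequality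
against the law under which the columns are conditionally independent given `Π` and each pair
`(Y i, Π)` keeps its law. Subtracting gives the claim.
-/

open Finset

/-- Probability that the random variable `X` takes the value `a`. -/
noncomputable def prOf {Ω α : Type*} [Fintype Ω] [DecidableEq α]
    (w : Ω → ℝ) (X : Ω → α) (a : α) : ℝ :=
  ∑ ω, if X ω = a then w ω else 0

/-- Shannon entropy (in bits). -/
noncomputable def entropy {Ω α : Type*} [Fintype Ω] [Fintype α] [DecidableEq α]
    (w : Ω → ℝ) (X : Ω → α) : ℝ :=
  -∑ a, prOf w X a * Real.logb 2 (prOf w X a)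

/-- Mutual information `I(X;Y) = H(X) + H(Y) - H(X,Y)`. -/
noncomputable def mutualInfo {Ω α β : Type*} [Fintype Ω] [Fintype α] [Fintype β]
    [DecidableEq α] [DecidableEq β] (w : Ω → ℝ) (X : Ω → α) (Y : Ω → β) : ℝ :=
  entropy w X + entropy w Y - entropy w (fun ω => (X ω, Y ω))

open Function

section

variable {Ω α β γ ι : Type*} [Fintype Ω] (w : Ω → ℝ)

lemma prOf_nonneg [DecidableEq α] (hw0 : ∀ ω, 0 ≤ w ω) (X : Ω → α) (a : α) :
    0 ≤ prOf w X a :=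
  sum_nonneg fun ω _ => by split_ifs <;> simp [hw0 ω]

lemma le_prOf_apply [DecidableEq α] (hw0 : ∀ ω, 0 ≤ w ω) (X : Ω → α) (ω : Ω) :
    w ω ≤ prOf w X (X ω) := by
  unfold prOf
  simpa using single_le_sum (f := fun ω' => if X ω' = X ω then w ω' else 0)
    (fun ω' _ => by split_ifs <;> simp [hw0 ω']) (mem_univ ω)

lemma sum_prOf_mul [Fintype α] [DecidableEq α] (X : Ω → α) (f : α → ℝ) :
    ∑ a, prOf w X a * f a = ∑ ω, w ω * f (X ω) := by
  simp only [prOf, sum_mul, ite_mul, zero_mul]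
  rw [sum_comm]
  simp

lemma sum_prOf [Fintype α] [DecidableEq α] (X : Ω → α) : ∑ a, prOf w X a = ∑ ω, w ω := by
  simpa using sum_prOf_mul w X 1

lemma sum_prOf_prodMk_left [Fintype β] [DecidableEq β] [DecidableEq γ]
    (Y : Ω → β) (Z : Ω → γ) (c : γ) :
    ∑ b, prOf w (fun ω => (Y ω, Z ω)) (b, c) = prOf w Z c := by
  simp only [prOf, Prod.mk.injEq, ite_and]
  rw [sum_comm]
  simp

lemma prOf_comp_of_injective [DecidableEq α] [DecidableEq β] (X : Ω → α) {F : α → β}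
    (hF : Injective F) (a : α) :
    prOf w (fun ω => F (X ω)) (F a) = prOf w X a := by
  simp only [prOf, hF.eq_iff]

lemma sum_mul_congr_of_pos (hw0 : ∀ ω, 0 ≤ w ω) {f g : Ω → ℝ}
    (h : ∀ ω, 0 < w ω → f ω = g ω) :
    ∑ ω, w ω * f ω = ∑ ω, w ω * g ω :=
  sum_congr rfl fun ω _ => by
    rcases (hw0 ω).eq_or_lt with h0 | h0
    · simp [← h0]
    · rw [h ω h0]

lemma entropy_eq_neg_sum [Fintype α] [DecidableEq α] (X : Ω → α) :
    entropy w X = -∑ ω, w ω * Real.logb 2 (prOf w X (X ω)) := by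
  rw [entropy, sum_prOf_mul w X fun a => Real.logb 2 (prOf w X a)]

lemma entropy_comp_of_injective [Fintype α] [Fintype β] [DecidableEq α] [DecidableEq β]
    (X : Ω → α) {F : α → β} (hF : Injective F) :
    entropy w (fun ω => F (X ω)) = entropy w X := by
  simp only [entropy_eq_neg_sum, prOf_comp_of_injective w X hF]

/-- Gibbs' inequality. -/
lemma entropy_le_neg_sum_mul_logb [Fintype α] [DecidableEq α] (hw0 : ∀ ω, 0 ≤ w ω)
    (X : Ω → α) (q : α → ℝ) (hq0 : ∀ a, 0 ≤ q a) (hq : ∑ a, q a ≤ ∑ ω, w ω)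
    (hpos : ∀ ω, 0 < w ω → 0 < q (X ω)) :
    entropy w X ≤ -∑ ω, w ω * Real.logb 2 (q (X ω)) := by
  have hterm : ∀ ω, w ω * (Real.log (q (X ω)) - Real.log (prOf w X (X ω)))
      ≤ w ω * (q (X ω) / prOf w X (X ω) - 1) := by
    intro ω
    rcases (hw0 ω).eq_or_lt with h0 | h0
    · simp [← h0]
    have hp := h0.trans_le (le_prOf_apply w hw0 X ω)
    rw [← Real.log_div (hpos ω h0).ne' hp.ne']
    exact mul_le_mul_of_nonneg_left (Real.log_le_sub_one_of_pos (div_pos (hpos ω h0) hp)) h0.le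
  have hratio : ∑ ω, w ω * (q (X ω) / prOf w X (X ω)) ≤ ∑ a, q a := by
    rw [← sum_prOf_mul w X fun a => q a / prOf w X a]
    refine sum_le_sum fun a _ => ?_
    rcases (prOf_nonneg w hw0 X a).eq_or_lt with h | h
    · rw [← h, zero_mul]
      exact hq0 a
    · rw [mul_div_cancel₀ _ h.ne']
  have hlog : ∑ ω, w ω * Real.log (q (X ω)) ≤ ∑ ω, w ω * Real.log (prOf w X (X ω)) := by
    have := sum_le_sum fun ω (_ : ω ∈ univ) => hterm ω
    simp only [mul_sub, mul_one, sum_sub_distrib] at this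
    linarith
  rw [entropy_eq_neg_sum, neg_le_neg_iff]
  simp only [Real.logb, mul_div_assoc', ← sum_div]
  exact div_le_div_of_nonneg_right hlog (Real.log_nonneg one_le_two)

lemma entropy_eq_sum_of_indep [Fintype ι] [DecidableEq ι] [Fintype β] [DecidableEq β]
    (hw0 : ∀ ω, 0 ≤ w ω) (Y : Ω → ι → β)
    (hY : ∀ g, prOf w Y g = ∏ i, prOf w (fun ω => Y ω i) (g i)) :
    entropy w Y = ∑ i, entropy w (fun ω => Y ω i) := by
  calc entropy w Y
      = -∑ ω, w ω * ∑ i, Real.logb 2 (prOf w (fun ω => Y ω i) (Y ω i)) := by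
        rw [entropy_eq_neg_sum]
        congr 1
        refine sum_mul_congr_of_pos w hw0 fun ω hω => ?_
        rw [hY, Real.logb_prod]
        exact fun i _ => (hω.trans_le (le_prOf_apply w hw0 (fun ω => Y ω i) ω)).ne'
    _ = ∑ i, entropy w (fun ω => Y ω i) := by
        simp only [entropy_eq_neg_sum, mul_sum, ← sum_neg_distrib]
        rw [sum_comm]

noncomputable def condEntropy [Fintype α] [Fintype γ] [DecidableEq α] [DecidableEq γ]
    (X : Ω → α) (Z : Ω → γ) : ℝ :=
  entropy w (fun ω => (X ω, Z ω)) - entropy w Z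

section

variable [Fintype α] [Fintype γ] [DecidableEq α] [DecidableEq γ]

lemma mutualInfo_eq_entropy_sub_condEntropy (X : Ω → α) (Z : Ω → γ) :
    mutualInfo w X Z = entropy w X - condEntropy w X Z := by
  rw [mutualInfo, condEntropy]
  ring

lemma condEntropy_eq_neg_sum (X : Ω → α) (Z : Ω → γ) :
    condEntropy w X Z = -∑ ω, w ω * (Real.logb 2 (prOf w (fun ω => (X ω, Z ω)) (X ω, Z ω))
      - Real.logb 2 (prOf w Z (Z ω))) := by
  simp only [condEntropy, entropy_eq_neg_sum, mul_sub, sum_sub_distrib]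
  ring

end

lemma condEntropy_le_sum_condEntropy [Fintype ι] [DecidableEq ι] [Fintype β] [DecidableEq β]
    [Fintype γ] [DecidableEq γ] (hw0 : ∀ ω, 0 ≤ w ω) (Y : Ω → ι → β) (Z : Ω → γ) :
    condEntropy w Y Z ≤ ∑ i, condEntropy w (fun ω => Y ω i) Z := by
  set pZ := prOf w Z
  set p : ι → β × γ → ℝ := fun i => prOf w (fun ω => (Y ω i, Z ω))
  -- the law with the same pairs `(Y i, Z)` under which the columns are independent given `Z`
  let q : (ι → β) × γ → ℝ := fun z => pZ z.2 * ∏ i, (p i (z.1 i, z.2) / pZ z.2)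
  have hq0 : ∀ z, 0 ≤ q z := fun z => mul_nonneg (prOf_nonneg w hw0 Z _)
    (prod_nonneg fun i _ => div_nonneg (prOf_nonneg w hw0 _ _) (prOf_nonneg w hw0 Z _))
  have hq : ∑ z, q z = ∑ c, pZ c := by
    rw [Fintype.sum_prod_type_right]
    refine sum_congr rfl fun c _ => ?_
    have hmarg : ∀ i, ∑ b, p i (b, c) / pZ c = pZ c / pZ c := fun i => by
      rw [← sum_div, sum_prOf_prodMk_left]
    simp only [q, ← mul_sum]
    rw [← Fintype.prod_sum fun i b => p i (b, c) / pZ c]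
    by_cases hc : pZ c = 0 <;> simp [hmarg, hc]
  have hZpos : ∀ ω, 0 < w ω → 0 < pZ (Z ω) := fun ω hω =>
    hω.trans_le (le_prOf_apply w hw0 Z ω)
  have hpos : ∀ ω, 0 < w ω → ∀ i, 0 < p i (Y ω i, Z ω) := fun ω hω i =>
    hω.trans_le (le_prOf_apply w hw0 (fun ω => (Y ω i, Z ω)) ω)
  have hlogq : ∀ ω, 0 < w ω → Real.logb 2 (q (Y ω, Z ω)) = Real.logb 2 (pZ (Z ω))
      + ∑ i, (Real.logb 2 (p i (Y ω i, Z ω)) - Real.logb 2 (pZ (Z ω))) := by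
    intro ω hω
    have hdiv : ∀ i ∈ univ, p i (Y ω i, Z ω) / pZ (Z ω) ≠ 0 :=
      fun i _ => (div_pos (hpos ω hω i) (hZpos ω hω)).ne'
    rw [Real.logb_mul (hZpos ω hω).ne' (prod_ne_zero_iff.2 hdiv), Real.logb_prod _ _ hdiv]
    simp only [Real.logb_div (hpos ω hω _).ne' (hZpos ω hω).ne']
  have hgibbs := entropy_le_neg_sum_mul_logb w hw0 (fun ω => (Y ω, Z ω)) q hq0
    (hq.trans (sum_prOf w Z)).le
    fun ω hω => mul_pos (hZpos ω hω) (prod_pos fun i _ => div_pos (hpos ω hω i) (hZpos ω hω))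
  rw [sum_mul_congr_of_pos w hw0 hlogq, entropy_eq_neg_sum] at hgibbs
  have hsum : ∑ i, condEntropy w (fun ω => Y ω i) Z = -∑ ω, w ω
      * ∑ i, (Real.logb 2 (p i (Y ω i, Z ω)) - Real.logb 2 (pZ (Z ω))) := by
    simp only [condEntropy_eq_neg_sum, mul_sum, ← sum_neg_distrib]
    exact sum_comm
  rw [hsum, condEntropy_eq_neg_sum]
  simp only [mul_add, mul_sub, sum_add_distrib, sum_sub_distrib] at hgibbs ⊢
  linarith

lemma mutualInfo_comp_of_injective [Fintype α] [Fintype β] [Fintype γ] [DecidableEq α]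
    [DecidableEq β] [DecidableEq γ] (X : Ω → α) (Z : Ω → γ) {F : α → β} (hF : Injective F) :
    mutualInfo w (fun ω => F (X ω)) Z = mutualInfo w X Z := by
  rw [mutualInfo, mutualInfo, entropy_comp_of_injective w X hF]
  congr 1
  exact entropy_comp_of_injective w (fun ω => (X ω, Z ω)) (hF.prodMap injective_id)

theorem sum_mutualInfo_le_of_indep [Fintype ι] [DecidableEq ι] [Fintype β] [DecidableEq β]
    [Fintype γ] [DecidableEq γ] (hw0 : ∀ ω, 0 ≤ w ω) (Y : Ω → ι → β) (Z : Ω → γ)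
    (hY : ∀ g, prOf w Y g = ∏ i, prOf w (fun ω => Y ω i) (g i)) :
    ∑ i, mutualInfo w (fun ω => Y ω i) Z ≤ mutualInfo w Y Z := by
  simp only [mutualInfo_eq_entropy_sub_condEntropy, sum_sub_distrib,
    ← entropy_eq_sum_of_indep w hw0 Y hY]
  linarith [condEntropy_le_sum_condEntropy w hw0 Y Z]

end

theorem info_cost_decomposition_general
    {Ω γ : Type*} [Fintype Ω] [Fintype γ] [DecidableEq γ] (T n : ℕ)
    (w : Ω → ℝ) (hw0 : ∀ ω, 0 ≤ w ω)
    (X : Fin T → Ω → (Fin n → Bool)) (Tr : Ω → γ)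
    (hcols : ∀ g : Fin n → (Fin T → Bool),
      prOf w (fun ω => fun i : Fin n => fun t : Fin T => X t ω i) g
        = ∏ i : Fin n, prOf w (fun ω => fun t : Fin T => X t ω i) (g i)) :
    mutualInfo w (fun ω => fun t : Fin T => X t ω) Tr ≥
      ∑ i : Fin n, mutualInfo w (fun ω => fun t : Fin T => X t ω i) Tr :=
  calc ∑ i, mutualInfo w (fun ω t => X t ω i) Tr
      ≤ mutualInfo w (fun ω i t => X t ω i) Tr := sum_mutualInfo_le_of_indep w hw0 _ Tr hcols
    _ = mutualInfo w (fun ω t => X t ω) Tr :=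
      (mutualInfo_comp_of_injective w _ Tr (Equiv.piComm fun _ _ => Bool).injective).symm

/-- Information cost decomposition (Bar-Yossef–Jayram–Kumar–Sivakumar): if the
inputs `X t ∈ {0,1}^n` of the `T` players have mutually independent columns (the
joint distribution of the `n` columns is the product of the column marginals, as for
`μ = ζ^n`), then for any transcript `Π`,
`I(X₁,…,X_T; Π) ≥ Σ_{i=1}^n I(X_{1,i},…,X_{T,i}; Π)`. -/
theorem info_cost_decomposition
    {Ω γ : Type*} [Fintype Ω] [Fintype γ] [DecidableEq γ] (T n : ℕ)
    (w : Ω → ℝ) (hw0 : ∀ ω, 0 ≤ w ω) (hw1 : ∑ ω, w ω = 1)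
    (X : Fin T → Ω → (Fin n → Bool)) (Tr : Ω → γ)
    (hcols : ∀ g : Fin n → (Fin T → Bool),
      prOf w (fun ω => fun i : Fin n => fun t : Fin T => X t ω i) g
        = ∏ i : Fin n, prOf w (fun ω => fun t : Fin T => X t ω i) (g i)) :
    mutualInfo w (fun ω => fun t : Fin T => X t ω) Tr ≥
      ∑ i : Fin n, mutualInfo w (fun ω => fun t : Fin T => X t ω i) Tr :=
  info_cost_decomposition_general T n w hw0 X Tr hcols
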